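/- For every integer ℓ with 0 ≤ ℓ < g, any two vertices u and v of G having the same degree, any edge e of G incident to u, and any edge f of G incident to v, the number of closed walks of length ℓ based at u that never traverse the edge e equals the number of closed walks of length ℓ based at v that never traverse the edge f. -/

import Mathlib

/-!
Below the girth, a closed walk at `x` that avoids the edge `xx'` also avoids the vertex `x'`,
since otherwise it would close a cycle of length at most `ℓ + 1`. This needs `ℓ + 1 < g`, which
holds for even `ℓ` because `g` is even; for odd `ℓ` bipartiteness leaves no closed walks at all.
Such a walk splits at its first return to `x`: it leaves along an edge `xa` with `a ≠ x'`, makes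
a closed excursion at `a` avoiding `x`, comes back along the same edge `ax` (any other edge would
again close a short cycle), and continues with a shorter closed walk at `x` avoiding `x'`. In the
resulting recursion only the degree of `x` and the common degree of its neighbours enter, so the
count is the same as in the biregular tree.
-/

open Finset

namespace SimpleGraph

variable {V : Type*} {G : SimpleGraph V}

theorem girth_le_length_add_one_of_adj {s t : V} (w : G.Walk s t) (hst : G.Adj s t)
    (he : s(s, t) ∉ w.edges) : G.girth ≤ w.length + 1 := by
  classical
  have hcycle : (Walk.cons hst.symm w.bypass).IsCycle :=
    (Walk.cons_isCycle_iff _ _).mpr ⟨w.bypass_isPath, fun h ↦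
      he (Sym2.eq_swap ▸ w.edges_bypass_subset_edges h)⟩
  have := girth_le_length hcycle
  have := w.length_bypass_le_length
  simp only [Walk.length_cons] at *
  omega

theorem girth_le_length_add_two_of_adj {s t x : V} (w : G.Walk s t) (hs : G.Adj x s)
    (ht : G.Adj x t) (hst : s ≠ t) (hx : x ∉ w.support) : G.girth ≤ w.length + 2 := by
  have he : s(s, x) ∉ (w.concat ht.symm).edges := by
    simp only [Walk.edges_concat, List.concat_eq_append, List.mem_append, List.mem_singleton,
      Sym2.eq_iff, not_or]
    exact ⟨fun h ↦ hx (w.snd_mem_support_of_mem_edges h), fun h ↦ hst h.1,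
      fun h ↦ hst (h.1.trans h.2)⟩
  simpa using girth_le_length_add_one_of_adj _ hs.symm he

theorem Coloring.even_girth (C : G.Coloring Bool) : Even G.girth := by
  by_cases h : G.IsAcyclic
  · simp [girth_eq_zero.mpr h]
  · obtain ⟨a, w, -, hw⟩ := exists_girth_eq_length.mpr h
    exact hw ▸ (C.even_length_iff_congr w).mpr Iff.rfl

theorem Walk.mem_edges_iff_mem_support_of_length_lt_girth {x x' y : V} (p : G.Walk x y)
    (hxx' : G.Adj x x') (hp : p.length + 1 < G.girth) :
    s(x, x') ∈ p.edges ↔ x' ∈ p.support := by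
  classical
  refine ⟨p.snd_mem_support_of_mem_edges, fun hx' ↦ by_contra fun he ↦ ?_⟩
  have := girth_le_length_add_one_of_adj (p.takeUntil x' hx') hxx'
    fun h ↦ he (p.edges_takeUntil_subset_edges hx' h)
  have := p.length_takeUntil_le_length hx'
  omega

namespace Walk

variable {u v x w : V}

theorem exists_concat_append_of_mem_support (q : G.Walk u w) (hx : x ∈ q.support) (hux : u ≠ x) :
    ∃ (b : V) (i : G.Walk u b) (h : G.Adj b x) (r : G.Walk x w),
      x ∉ i.support ∧ q = (i.concat h).append r := by
  induction q with
  | nil => simp_all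
  | @cons u c w h q ih =>
    by_cases hcx : c = x
    · subst hcx
      exact ⟨u, nil, h, q, by simpa [eq_comm] using hux, rfl⟩
    · obtain ⟨b, i, hb, r, hi, rfl⟩ := ih (by simpa [Ne.symm hux] using hx) hcx
      exact ⟨b, cons h i, hb, r, by simp [Ne.symm hux, hi], rfl⟩

theorem takeUntil_concat_append [DecidableEq V] (i : G.Walk u v) (h : G.Adj v x) (r : G.Walk x w)
    (hi : x ∉ i.support) (hx : x ∈ ((i.concat h).append r).support) :
    ((i.concat h).append r).takeUntil x hx = i.concat h := by
  induction i with
  | nil =>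
    change (cons h r).takeUntil x hx = cons h nil
    rw [takeUntil_cons r.start_mem_support (by simpa [eq_comm] using hi), takeUntil_first]
  | cons h' i ih =>
    rw [support_cons, List.mem_cons, not_or] at hi
    change (cons h' ((i.concat h).append r)).takeUntil x hx = cons h' (i.concat h)
    rw [takeUntil_cons (by simp) (Ne.symm hi.1), ih h hi.2]

theorem append_cancel_left {p : G.Walk u v} {q q' : G.Walk v w} (h : p.append q = p.append q') :
    q = q' := by
  induction p with
  | nil => exact h
  | cons _ _ ih => exact ih (by simpa using h)

theorem concat_append_inj [DecidableEq V] {i i' : G.Walk u v} {h : G.Adj v x} {r r' : G.Walk x w}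
    (hi : x ∉ i.support) (hi' : x ∉ i'.support)
    (he : (i.concat h).append r = (i'.concat h).append r') : i = i' ∧ r = r' := by
  have hconcat : i.concat h = i'.concat h := by
    rw [← takeUntil_concat_append i h r hi (by simp),
      ← takeUntil_concat_append i' h r' hi' (by simp)]
    simp_rw [he]
  obtain ⟨_, hii'⟩ := concat_inj hconcat
  rw [copy_rfl_rfl] at hii'
  subst hii'
  exact ⟨rfl, append_cancel_left he⟩

theorem exists_eq_cons_concat_append_of_length_lt_girth (p : G.Walk x x) (hnil : ¬p.Nil)
    (hp : p.length < G.girth) :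
    ∃ (a : V) (h : G.Adj x a) (i : G.Walk a a) (r : G.Walk x x),
      x ∉ i.support ∧ p = cons h ((i.concat h.symm).append r) := by
  cases p with
  | nil => simp at hnil
  | @cons _ a _ hxa q =>
    obtain ⟨b, i, hbx, r, hi, rfl⟩ :=
      q.exists_concat_append_of_mem_support q.end_mem_support hxa.ne'
    obtain rfl : b = a := by
      by_contra hba
      have := girth_le_length_add_two_of_adj i hxa hbx.symm (Ne.symm hba) hi
      simp only [length_cons, length_append, length_concat] at hp
      omega
    exact ⟨b, hxa, i, r, hi, rfl⟩

end Walk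

theorem degree_eq_of_adj_of_degree_eq {U : Set V} {c d : ℕ} [G.LocallyFinite]
    (hbip : ∀ ⦃u v : V⦄, G.Adj u v → (u ∈ U ↔ v ∉ U))
    (hdegU : ∀ v ∈ U, G.degree v = c) (hdegW : ∀ v ∉ U, G.degree v = d)
    ⦃x y x' y' : V⦄ (hxy : G.degree x = G.degree y) (hxx' : G.Adj x x') (hyy' : G.Adj y y') :
    G.degree x' = G.degree y' := by
  classical
  have hnbr : ∀ ⦃z z'⦄, G.Adj z z' → G.degree z' = if z ∈ U then d else c := by
    intro z z' h
    by_cases hz : z ∈ U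
    · simp [hz, hdegW z' ((hbip h).mp hz)]
    · simp [hz, hdegU z' (by have := hbip h; tauto)]
  rw [hnbr hxx', hnbr hyy']
  by_cases hx : x ∈ U <;> by_cases hy : y ∈ U <;>
    simp only [hx, hy, hdegU, hdegW, if_true, if_false, not_false_eq_true] at hxy ⊢ <;> omega

/-- The number of closed walks of length `L` at a vertex of degree `m` in the infinite tree whose
degrees alternate between `m` and `k`, avoiding a fixed neighbour of that vertex. -/
def biregularTreeWalkCount : ℕ → ℕ → ℕ → ℕ
  | 0, _, _ => 1
  | L + 1, m, k => (m - 1) * ∑ j : Fin L,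
      biregularTreeWalkCount j k m * biregularTreeWalkCount (L - 1 - j) m k

theorem biregularTreeWalkCount_succ (L m k : ℕ) :
    biregularTreeWalkCount (L + 1) m k = (m - 1) * ∑ j ∈ range L,
      biregularTreeWalkCount j k m * biregularTreeWalkCount (L - 1 - j) m k := by
  rw [biregularTreeWalkCount, Fin.sum_univ_eq_sum_range
    (fun j ↦ biregularTreeWalkCount j k m * biregularTreeWalkCount (L - 1 - j) m k)]

section Counting

variable [DecidableEq V] [G.LocallyFinite]

variable (G) in
def closedWalksAvoiding (L : ℕ) (x z : V) : Finset (G.Walk x x) :=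
  {p ∈ G.finsetWalkLength L x x | z ∉ p.support}

theorem mem_closedWalksAvoiding {L : ℕ} {x z : V} {p : G.Walk x x} :
    p ∈ G.closedWalksAvoiding L x z ↔ p.length = L ∧ z ∉ p.support := by
  simp [closedWalksAvoiding, mem_finsetWalkLength_iff]

theorem card_closedWalksAvoiding_zero {x z : V} (hxz : x ≠ z) :
    #(G.closedWalksAvoiding 0 x z) = 1 := by
  rw [card_eq_one]
  refine ⟨.nil, eq_singleton_iff_unique_mem.mpr ⟨?_, fun p hp ↦ ?_⟩⟩
  · simpa [mem_closedWalksAvoiding, eq_comm] using hxz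
  · exact (Walk.length_eq_zero_iff.mp (mem_closedWalksAvoiding.mp hp).1).eq_nil

theorem cons_concat_append_mem_closedWalksAvoiding {x x' a : V} {j k : ℕ} {i : G.Walk a a}
    {r : G.Walk x x} (hxx' : G.Adj x x') (hxa : G.Adj x a) (hax' : a ≠ x')
    (hi : i ∈ G.closedWalksAvoiding j a x) (hr : r ∈ G.closedWalksAvoiding k x x')
    (hj : j + 2 < G.girth) :
    Walk.cons hxa ((i.concat hxa.symm).append r) ∈ G.closedWalksAvoiding (j + k + 2) x x' := by
  rw [mem_closedWalksAvoiding] at hi hr ⊢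
  have hx'i : x' ∉ i.support := fun hx' ↦ by
    have := girth_le_length_add_two_of_adj (i.takeUntil x' hx') hxa hxx' hax'
      fun hx ↦ hi.2 (i.support_takeUntil_subset_support hx' hx)
    have := i.length_takeUntil_le_length hx'
    omega
  simp only [Walk.length_cons, Walk.length_append, Walk.length_concat, Walk.support_cons,
    Walk.mem_support_append_iff, Walk.support_concat, List.mem_cons, List.mem_append]
  refine ⟨by omega, ?_⟩
  have := hxx'.ne
  tauto

theorem card_closedWalksAvoiding_succ {L : ℕ} {x x' : V} (hxx' : G.Adj x x')
    (hL : L + 1 < G.girth) :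
    #(G.closedWalksAvoiding (L + 1) x x') = ∑ a ∈ (G.neighborFinset x).erase x', ∑ j ∈ range L,
      #(G.closedWalksAvoiding j a x) * #(G.closedWalksAvoiding (L - 1 - j) x x') := by
  simp_rw [← card_product, ← card_sigma]
  symm
  set S := ((G.neighborFinset x).erase x').sigma fun a ↦ (range L).sigma fun j ↦
    G.closedWalksAvoiding j a x ×ˢ G.closedWalksAvoiding (L - 1 - j) x x'
  have hadj : ∀ t ∈ S, G.Adj x t.1 := fun t ht ↦
    (mem_neighborFinset ..).mp (mem_erase.mp (mem_sigma.mp ht).1).2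
  refine card_bij
    (fun t ht ↦ Walk.cons (hadj t ht) ((t.2.2.1.concat (hadj t ht).symm).append t.2.2.2))
    ?_ ?_ ?_
  · rintro ⟨a, j, i, r⟩ ht
    simp only [S, mem_sigma, mem_erase, mem_neighborFinset, mem_range, mem_product] at ht
    obtain ⟨⟨hax', hxa⟩, hj, hi, hr⟩ := ht
    have := cons_concat_append_mem_closedWalksAvoiding hxx' hxa hax' hi hr (by omega)
    rwa [show j + (L - 1 - j) + 2 = L + 1 by omega] at this
  · rintro ⟨a, j, i, r⟩ ht ⟨a', j', i', r'⟩ ht' he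
    simp only [S, mem_sigma, mem_product, mem_closedWalksAvoiding] at ht ht'
    obtain ⟨rfl, he⟩ := (Walk.cons.injEq ..).mp he
    obtain ⟨rfl, rfl⟩ := Walk.concat_append_inj ht.2.2.1.2 ht'.2.2.1.2 (eq_of_heq he)
    rw [← ht.2.2.1.1, ← ht'.2.2.1.1]
  · intro p hp
    rw [mem_closedWalksAvoiding] at hp
    obtain ⟨a, hxa, i, r, hi, rfl⟩ := p.exists_eq_cons_concat_append_of_length_lt_girth
      (by simp [← Walk.length_eq_zero_iff, hp.1]) (by omega)
    simp only [Walk.length_cons, Walk.length_append, Walk.length_concat, Walk.support_cons,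
      Walk.mem_support_append_iff, Walk.support_concat, List.mem_cons, List.mem_append,
      not_or] at hp
    refine ⟨⟨a, i.length, i, r⟩, ?_, rfl⟩
    simp only [S, mem_sigma, mem_erase, mem_neighborFinset, mem_range, mem_product,
      mem_closedWalksAvoiding]
    obtain ⟨hlen, -, ⟨hx'i, -⟩, hx'r⟩ := hp
    exact ⟨⟨fun h ↦ hx'i (h ▸ i.start_mem_support), hxa⟩, by omega, ⟨trivial, hi⟩, by omega, hx'r⟩

theorem setOf_closedWalk_edge_notMem_eq {L : ℕ} {x x' : V} (hxx' : G.Adj x x')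
    (hL : L + 1 < G.girth) :
    {p : G.Walk x x | p.length = L ∧ s(x, x') ∉ p.edges} = G.closedWalksAvoiding L x x' := by
  ext p
  rw [mem_coe, mem_closedWalksAvoiding]
  exact and_congr_right fun hp ↦
    not_congr (p.mem_edges_iff_mem_support_of_length_lt_girth hxx' (hp ▸ hL))

theorem card_closedWalksAvoiding_eq_biregularTreeWalkCount
    (hdeg : ∀ ⦃x a b : V⦄, G.Adj x a → G.Adj a b → G.degree b = G.degree x)
    {L : ℕ} (hL : L < G.girth) {x x' : V} (hxx' : G.Adj x x') :
    #(G.closedWalksAvoiding L x x') = biregularTreeWalkCount L (G.degree x) (G.degree x') := by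
  induction L using Nat.strong_induction_on generalizing x x' with
  | _ L ih =>
  cases L with
  | zero => rw [card_closedWalksAvoiding_zero hxx'.ne, biregularTreeWalkCount]
  | succ L =>
    have hterm : ∀ a ∈ (G.neighborFinset x).erase x',
        ∑ j ∈ range L, #(G.closedWalksAvoiding j a x) * #(G.closedWalksAvoiding (L - 1 - j) x x')
          = ∑ j ∈ range L, biregularTreeWalkCount j (G.degree x') (G.degree x) *
              biregularTreeWalkCount (L - 1 - j) (G.degree x) (G.degree x') := by
      intro a ha
      have hxa : G.Adj x a := (mem_neighborFinset ..).mp (mem_erase.mp ha).2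
      refine sum_congr rfl fun j hj ↦ ?_
      rw [mem_range] at hj
      rw [ih j (by omega) (by omega) hxa.symm, ih (L - 1 - j) (by omega) (by omega) hxx',
        hdeg hxa.symm hxx']
    rw [card_closedWalksAvoiding_succ hxx' hL, biregularTreeWalkCount_succ, sum_congr rfl hterm,
      sum_const, card_erase_of_mem ((mem_neighborFinset ..).mpr hxx'),
      card_neighborFinset_eq_degree, smul_eq_mul]

end Counting

end SimpleGraph

open SimpleGraph

theorem closed_walk_avoiding_edge_count_eq_general {V : Type*} [Fintype V]
    (G : SimpleGraph V) [DecidableRel G.Adj]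
    (U : Set V) (c d : ℕ)
    (hbip : ∀ ⦃u v : V⦄, G.Adj u v → (u ∈ U ↔ v ∉ U))
    (hdegU : ∀ v ∈ U, G.degree v = c)
    (hdegW : ∀ v ∉ U, G.degree v = d)
    (g : ℕ) (hg : G.girth = g)
    (ℓ : ℕ) (hℓ : ℓ < g) (u v : V) (hdeg : G.degree u = G.degree v)
    (e f : Sym2 V) (he : e ∈ G.incidenceSet u) (hf : f ∈ G.incidenceSet v) :
    {p : G.Walk u u | p.length = ℓ ∧ e ∉ p.edges}.ncard
      = {p : G.Walk v v | p.length = ℓ ∧ f ∉ p.edges}.ncard := by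
  classical
  have hnbr := degree_eq_of_adj_of_degree_eq hbip hdegU hdegW
  have hdeg₂ : ∀ ⦃x a b : V⦄, G.Adj x a → G.Adj a b → G.degree b = G.degree x :=
    fun _ _ _ hxa hab ↦ hnbr rfl hab hxa.symm
  let C : G.Coloring Bool := Coloring.mk (fun x ↦ decide (x ∈ U)) fun h ↦ by
    have := hbip h
    simp only [ne_eq, decide_eq_decide]
    tauto
  obtain ⟨u', rfl⟩ := Sym2.mem_iff_exists.mp he.2
  obtain ⟨v', rfl⟩ := Sym2.mem_iff_exists.mp hf.2
  rw [mem_incidenceSet] at he hf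
  rcases Nat.even_or_odd ℓ with hℓ | hℓ
  · have hℓg : ℓ + 1 < G.girth := by
      obtain ⟨k, hk⟩ := C.even_girth
      obtain ⟨m, rfl⟩ := hℓ
      omega
    rw [setOf_closedWalk_edge_notMem_eq he hℓg, setOf_closedWalk_edge_notMem_eq hf hℓg,
      Set.ncard_coe_finset, Set.ncard_coe_finset,
      card_closedWalksAvoiding_eq_biregularTreeWalkCount hdeg₂ (by omega) he,
      card_closedWalksAvoiding_eq_biregularTreeWalkCount hdeg₂ (by omega) hf, hdeg,
      hnbr hdeg he hf]
  · have hlen : ∀ x (p : G.Walk x x), p.length ≠ ℓ := fun x p h ↦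
      Nat.not_even_iff_odd.mpr hℓ (h ▸ (C.even_length_iff_congr p).mpr Iff.rfl)
    simp [hlen]

/-- For `0 ≤ ℓ < g`, vertices `u, v` of the same degree, an edge `e`
incident to `u` and an edge `f` incident to `v`, the number of closed walks of length
`ℓ` based at `u` never traversing `e` equals the number of closed walks of length `ℓ`
based at `v` never traversing `f`. -/
theorem closed_walk_avoiding_edge_count_eq {V : Type*} [Fintype V] [DecidableEq V]
    (G : SimpleGraph V) [DecidableRel G.Adj]
    (U : Set V) (c d : ℕ) (hc : 2 ≤ c) (hd : 2 ≤ d)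
    (hbip : ∀ ⦃u v : V⦄, G.Adj u v → (u ∈ U ↔ v ∉ U))
    (hdegU : ∀ v ∈ U, G.degree v = c)
    (hdegW : ∀ v ∉ U, G.degree v = d)
    (hcyc : ¬ G.IsAcyclic) (g : ℕ) (hg : G.girth = g)
    (ℓ : ℕ) (hℓ : ℓ < g) (u v : V) (hdeg : G.degree u = G.degree v)
    (e f : Sym2 V) (he : e ∈ G.incidenceSet u) (hf : f ∈ G.incidenceSet v) :
    {p : G.Walk u u | p.length = ℓ ∧ e ∉ p.edges}.ncard
      = {p : G.Walk v v | p.length = ℓ ∧ f ∉ p.edges}.ncard :=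
  closed_walk_avoiding_edge_count_eq_general G U c d hbip hdegU hdegW g hg ℓ hℓ u v hdeg e f he hf
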